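/- arXiv:1610.07100 — 3 statements merged into one kernel-verified Lean document; each statement's English description precedes it below -/
import Mathlib

section
/- Let d ≥ 1 be an integer with d + 1 even, and let N be a positive multiple of d + 1. Then there exists an Ising instance on N variables whose graph has maximum degree at most d and which has at least ((d+1) choose (d+1)/2)^{N/(d+1)} local minima, each of which is also a global minimum. -/
/-!
Split the variables into blocks of size `d + 1`, set `h = 0` and `J i j = 1` for distinct `i, j`
in a common block, so every degree is `d`. With `M b` the magnetization of block `b`,
`2 H(S) = ∑ b, M b ^ 2 - N`, and flipping `S i` changes `H` by `2 - 2 S i M b`. As `M b` is an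
integer, `S` is a local minimum iff every block is balanced, i.e. iff `H(S) = -N/2`, the least
possible value. Balanced blocks are chosen independently, `(d+1).choose ((d+1)/2)` ways each.
-/

open Finset

/-- An assignment gives each variable the value `-1` or `1`. -/
def IsAssignment {N : ℕ} (S : Fin N → ℝ) : Prop := ∀ i, S i = -1 ∨ S i = 1

/-- Energy of an Ising instance: `H(S) = ∑ i, h i * S i + ∑_{i<j} J i j * S i * S j`. -/
noncomputable def energy {N : ℕ} (h : Fin N → ℝ) (J : Fin N → Fin N → ℝ)
    (S : Fin N → ℝ) : ℝ :=
  ∑ i, h i * S i + ∑ i, ∑ j, if i < j then J i j * S i * S j else 0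

/-- The assignment obtained from `S` by flipping the spin at `i`. -/
noncomputable def flipAt {N : ℕ} (S : Fin N → ℝ) (i : Fin N) : Fin N → ℝ :=
  Function.update S i (-(S i))

/-- A local minimum: flipping any single variable strictly increases the energy. -/
def IsingLocalMin {N : ℕ} (h : Fin N → ℝ) (J : Fin N → Fin N → ℝ) (S : Fin N → ℝ) : Prop :=
  IsAssignment S ∧ ∀ i, energy h J S < energy h J (flipAt S i)

/-- A global minimum: minimal energy among all assignments. -/
def IsingGlobalMin {N : ℕ} (h : Fin N → ℝ) (J : Fin N → Fin N → ℝ) (S : Fin N → ℝ) : Prop :=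
  IsAssignment S ∧ ∀ S', IsAssignment S' → energy h J S ≤ energy h J S'

/-- Degree of variable `i` in the graph of the instance: the number of `j ≠ i` with `J i j ≠ 0`. -/
noncomputable def degreeJ {N : ℕ} (J : Fin N → Fin N → ℝ) (i : Fin N) : ℕ :=
  Set.ncard {j | j ≠ i ∧ J i j ≠ 0}

lemma IsAssignment.sq_eq_one {N : ℕ} {S : Fin N → ℝ} (hS : IsAssignment S) (i : Fin N) :
    S i ^ 2 = 1 := by
  rcases hS i with h | h <;> simp [h]

lemma IsAssignment.exists_int_sum_eq {N : ℕ} {S : Fin N → ℝ} (hS : IsAssignment S)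
    (s : Finset (Fin N)) : ∃ z : ℤ, ∑ i ∈ s, S i = z := by
  refine ⟨∑ i ∈ s, if S i = 1 then 1 else -1, ?_⟩
  push_cast
  refine sum_congr rfl fun i _ => ?_
  rcases hS i with h | h <;> simp [h]

/-- A summand of the sign of the sum `T` gives `|T| < 1`, and `T` is an integer. -/
lemma IsAssignment.sum_eq_zero_of_mul_sum_lt_one {N : ℕ} {S : Fin N → ℝ} (hS : IsAssignment S)
    {s : Finset (Fin N)} (hlt : ∀ i ∈ s, S i * ∑ j ∈ s, S j < 1) : ∑ j ∈ s, S j = 0 := by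
  obtain ⟨z, hz⟩ := hS.exists_int_sum_eq s
  have hlt_one : ∑ j ∈ s, S j < 1 := by
    by_contra! hge
    obtain ⟨i, hi, hpos⟩ := exists_lt_of_sum_lt (f := 0) (g := S) (by simp; linarith)
    have := hlt i hi
    rcases hS i with h | h <;> simp_all <;> linarith
  have hgt_neg_one : -1 < ∑ j ∈ s, S j := by
    by_contra! hle
    obtain ⟨i, hi, hneg⟩ := exists_lt_of_sum_lt (f := S) (g := 0) (by simp; linarith)
    have := hlt i hi
    rcases hS i with h | h <;> simp_all <;> linarith
  rw [hz] at hlt_one hgt_neg_one ⊢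
  have : z = 0 := by
    have : z < 1 := by exact_mod_cast hlt_one
    have : -1 < z := by exact_mod_cast hgt_neg_one
    omega
  simp [this]

lemma two_mul_sum_sum_ite_lt {N : ℕ} (f : Fin N → Fin N → ℝ) (hsymm : ∀ i j, f i j = f j i)
    (hdiag : ∀ i, f i i = 0) :
    2 * ∑ i, ∑ j, (if i < j then f i j else 0) = ∑ i, ∑ j, f i j := by
  have hsplit : ∀ i j, f i j = (if i < j then f i j else 0) + (if j < i then f j i else 0) := by
    intro i j
    rcases lt_trichotomy i j with h | rfl | h
    · simp [h, h.not_gt]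
    · simp [hdiag]
    · simp [h, h.not_gt, hsymm i j]
  rw [sum_congr rfl fun i _ => sum_congr rfl fun j _ => hsplit i j]
  simp only [sum_add_distrib]
  rw [sum_comm (f := fun i j => if j < i then f j i else 0)]
  ring

lemma flipAt_apply {N : ℕ} (S : Fin N → ℝ) (i j : Fin N) :
    flipAt S i j = S j - if j = i then 2 * S i else 0 := by
  rcases eq_or_ne j i with rfl | h
  · rw [flipAt, Function.update_self, if_pos rfl]
    ring
  · simp [flipAt, h]

lemma sum_sq_flipAt {N : ℕ} (S : Fin N → ℝ) (i : Fin N) : ∑ j, flipAt S i j ^ 2 = ∑ j, S j ^ 2 := by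
  refine sum_congr rfl fun j _ => ?_
  rcases eq_or_ne j i with rfl | h
  · simp [flipAt]
  · simp [flipAt, h]

section Blocks

variable {N : ℕ} {β : Type*} [DecidableEq β] (blk : Fin N → β)

noncomputable def blockJ : Fin N → Fin N → ℝ := fun i j => if blk i = blk j ∧ i ≠ j then 1 else 0

noncomputable def blockSum (S : Fin N → ℝ) (b : β) : ℝ := ∑ i with blk i = b, S i

lemma blockJ_symm (i j : Fin N) : blockJ blk i j = blockJ blk j i := by
  simp only [blockJ, eq_comm, ne_comm]

lemma blockJ_self (i : Fin N) : blockJ blk i i = 0 := by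
  simp [blockJ]

lemma degreeJ_blockJ (i : Fin N) : degreeJ (blockJ blk) i = #{j | blk j = blk i} - 1 := by
  have : {j | j ≠ i ∧ blockJ blk i j ≠ 0} =
      (({j | blk j = blk i} : Finset (Fin N)).erase i : Set (Fin N)) := by
    ext j; simp [blockJ, eq_comm]
  rw [degreeJ, this, Set.ncard_coe_finset, card_erase_of_mem (by simp)]

lemma two_mul_energy_blockJ [Fintype β] (S : Fin N → ℝ) :
    2 * energy 0 (blockJ blk) S = ∑ b, blockSum blk S b ^ 2 - ∑ i, S i ^ 2 := by
  have hpair : ∀ i j, blockJ blk i j * S i * S j =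
      (if blk j = blk i then S i * S j else 0) - if j = i then S i * S j else 0 := by
    intro i j
    by_cases hb : blk i = blk j <;> by_cases hij : i = j <;> simp_all [blockJ, eq_comm]
  have hsquares : ∑ b, blockSum blk S b ^ 2 = ∑ i, S i * blockSum blk S (blk i) := by
    rw [← sum_fiberwise univ blk]
    refine sum_congr rfl fun b _ => ?_
    rw [sq, blockSum, sum_mul]
    refine sum_congr rfl fun i hi => ?_
    rw [(mem_filter.mp hi).2, blockSum]
  simp only [energy, Pi.zero_apply, zero_mul, sum_const_zero, zero_add]
  rw [two_mul_sum_sum_ite_lt (fun i j => blockJ blk i j * S i * S j)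
    (fun i j => by rw [blockJ_symm]; ring) (fun i => by simp [blockJ_self])]
  rw [hsquares]
  simp only [hpair, sum_sub_distrib, sum_ite_eq', mem_univ, if_true, ← sum_filter, blockSum,
    mul_sum, sq]

lemma blockSum_flipAt (S : Fin N → ℝ) (i : Fin N) (b : β) :
    blockSum blk (flipAt S i) b = blockSum blk S b - if blk i = b then 2 * S i else 0 := by
  simp [blockSum, flipAt_apply, sum_sub_distrib, sum_ite_eq']

lemma energy_flipAt_blockJ [Fintype β] (S : Fin N → ℝ) (i : Fin N) :
    energy 0 (blockJ blk) (flipAt S i) =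
      energy 0 (blockJ blk) S + 2 * S i * (S i - blockSum blk S (blk i)) := by
  have hsq : ∀ b, (blockSum blk S b - if blk i = b then 2 * S i else 0) ^ 2 =
      blockSum blk S b ^ 2 + if blk i = b then 4 * S i * (S i - blockSum blk S b) else 0 := by
    intro b; split_ifs <;> ring
  have h := two_mul_energy_blockJ blk (flipAt S i)
  simp only [blockSum_flipAt, sum_sq_flipAt, hsq, sum_add_distrib, sum_ite_eq, mem_univ,
    if_true] at h
  linarith [two_mul_energy_blockJ blk S]

theorem isingLocalMin_blockJ_iff [Fintype β] {S : Fin N → ℝ} :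
    IsingLocalMin 0 (blockJ blk) S ↔ IsAssignment S ∧ ∀ b, blockSum blk S b = 0 := by
  simp only [IsingLocalMin, energy_flipAt_blockJ, lt_add_iff_pos_right]
  refine and_congr_right fun hS => ⟨fun hloc b => ?_, fun hzero i => ?_⟩
  · refine hS.sum_eq_zero_of_mul_sum_lt_one fun i hi => ?_
    have hflip := hloc i
    rw [(mem_filter.mp hi).2] at hflip
    change S i * blockSum blk S b < 1
    nlinarith [hS.sq_eq_one i]
  · rw [hzero, sub_zero]
    nlinarith [hS.sq_eq_one i]

theorem IsingLocalMin.isingGlobalMin_blockJ [Fintype β] {S : Fin N → ℝ}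
    (hS : IsingLocalMin 0 (blockJ blk) S) : IsingGlobalMin 0 (blockJ blk) S := by
  obtain ⟨hS, hzero⟩ := (isingLocalMin_blockJ_iff blk).mp hS
  refine ⟨hS, fun S' hS' => ?_⟩
  have h := two_mul_energy_blockJ blk S
  have h' := two_mul_energy_blockJ blk S'
  simp only [hzero, hS.sq_eq_one, hS'.sq_eq_one, sum_const, card_univ, Fintype.card_fin,
    nsmul_eq_mul, mul_one] at h h'
  have : 0 ≤ ∑ b, blockSum blk S' b ^ 2 := sum_nonneg fun b _ => sq_nonneg _
  linarith

end Blocks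

lemma finite_setOf_isAssignment (N : ℕ) : {S : Fin N → ℝ | IsAssignment S}.Finite := by
  have : {S : Fin N → ℝ | IsAssignment S} = Set.univ.pi fun _ => {-1, 1} := by
    ext S; simp [IsAssignment, Set.mem_pi]
  rw [this]
  exact Set.Finite.pi fun _ => Set.toFinite _

section Spins

variable {ι : Type*} [DecidableEq ι]

def spinsOn (s : Finset ι) (x : ι) : ℝ := if x ∈ s then 1 else -1

lemma spinsOn_eq_one_iff {s : Finset ι} {x : ι} : spinsOn s x = 1 ↔ x ∈ s := by
  by_cases hx : x ∈ s <;> norm_num [spinsOn, hx]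

lemma spinsOn_injective : Function.Injective (spinsOn (ι := ι)) := by
  intro s t hst
  ext x
  rw [← spinsOn_eq_one_iff, hst, spinsOn_eq_one_iff]

lemma sum_spinsOn [Fintype ι] (s : Finset ι) : ∑ x, spinsOn s x = 2 * #s - Fintype.card ι := by
  have hcard : #(univ \ s) + #s = Fintype.card ι := by
    rw [card_sdiff_add_card_eq_card (subset_univ s), card_univ]
  simp only [spinsOn, sum_ite, sum_const, nsmul_eq_mul, mul_one, mul_neg, filter_mem_eq_inter,
    univ_inter, filter_notMem_eq_sdiff, ← hcard]
  push_cast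
  ring

end Spins

section ProductBlocks

variable {N : ℕ} {ι β : Type*} [Fintype ι] [DecidableEq β] (e : Fin N ≃ ι × β)

lemma filter_snd_equiv_eq_map (b : β) :
    ({j | (e j).2 = b} : Finset (Fin N)) =
      univ.map ((Function.Embedding.sectL ι b).trans e.symm.toEmbedding) := by
  ext j
  simp only [mem_filter, mem_univ, true_and, mem_map, Function.Embedding.trans_apply,
    Function.Embedding.sectL_apply, Equiv.coe_toEmbedding]
  constructor
  · rintro rfl
    exact ⟨(e j).1, by simp⟩
  · rintro ⟨x, rfl⟩
    simp

lemma degreeJ_blockJ_snd_equiv (i : Fin N) :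
    degreeJ (blockJ fun j => (e j).2) i = Fintype.card ι - 1 := by
  rw [degreeJ_blockJ, filter_snd_equiv_eq_map, card_map, card_univ]

lemma blockSum_snd_equiv (S : Fin N → ℝ) (b : β) :
    blockSum (fun j => (e j).2) S b = ∑ x, S (e.symm (x, b)) := by
  simp [blockSum, filter_snd_equiv_eq_map, sum_map]

lemma choose_pow_le_ncard_isingLocalMin [DecidableEq ι] [Fintype β]
    (hι : Even (Fintype.card ι)) :
    (Fintype.card ι).choose (Fintype.card ι / 2) ^ Fintype.card β ≤
      {S | IsingLocalMin 0 (blockJ fun j => (e j).2) S}.ncard := by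
  set k := Fintype.card ι / 2
  let config (c : β → {s : Finset ι // #s = k}) : Fin N → ℝ :=
    fun j => spinsOn (c (e j).2) (e j).1
  have hinj : Function.Injective config := by
    intro c c' h
    funext b
    refine Subtype.ext (spinsOn_injective (funext fun x => ?_))
    simpa [config] using congrFun h (e.symm (x, b))
  have hlocal : ∀ c, IsingLocalMin 0 (blockJ fun j => (e j).2) (config c) := by
    intro c
    refine (isingLocalMin_blockJ_iff _).mpr ⟨fun j => ?_, fun b => ?_⟩
    · by_cases h : (e j).1 ∈ (c (e j).2).1 <;> simp [config, spinsOn, h]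
    · have hk : 2 * (k : ℝ) = Fintype.card ι := by exact_mod_cast Nat.two_mul_div_two_of_even hι
      simp only [blockSum_snd_equiv, config, Equiv.apply_symm_apply, sum_spinsOn, (c b).2, hk,
        sub_self]
  calc (Fintype.card ι).choose k ^ Fintype.card β
      = Nat.card (β → {s : Finset ι // #s = k}) := by
        simp [Nat.card_eq_fintype_card, Fintype.card_finset_len]
    _ = (Set.range config).ncard := (Set.ncard_range_of_injective hinj).symm
    _ ≤ _ := Set.ncard_le_ncard (Set.range_subset_iff.mpr hlocal)
        ((finite_setOf_isAssignment N).subset fun _ hS => hS.1)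

end ProductBlocks

theorem stmt1_general (d N : ℕ) (hde : Even (d + 1)) (hdvd : (d + 1) ∣ N) :
    ∃ (h : Fin N → ℝ) (J : Fin N → Fin N → ℝ),
      (∀ i j, J i j = J j i) ∧ (∀ i, J i i = 0) ∧
      (∀ i, degreeJ J i ≤ d) ∧
      ((d + 1).choose ((d + 1) / 2)) ^ (N / (d + 1)) ≤
        Set.ncard {S : Fin N → ℝ | IsingLocalMin h J S} ∧
      ∀ S, IsingLocalMin h J S → IsingGlobalMin h J S := by
  obtain ⟨m, rfl⟩ := hdvd
  let e : Fin ((d + 1) * m) ≃ Fin (d + 1) × Fin m := finProdFinEquiv.symm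
  refine ⟨0, blockJ fun i => (e i).2, blockJ_symm _, blockJ_self _, fun i => ?_, ?_,
    fun S hS => hS.isingGlobalMin_blockJ⟩
  · simp [degreeJ_blockJ_snd_equiv]
  · simpa [Nat.mul_div_cancel_left m d.succ_pos] using
      choose_pow_le_ncard_isingLocalMin e (by simpa using hde)

/-- for `d ≥ 1` with `d + 1` even and `N` a positive multiple of `d + 1`, there
is an Ising instance on `N` variables of maximum degree at most `d` with at least
`((d+1).choose ((d+1)/2)) ^ (N/(d+1))` local minima, each of which is a global minimum. -/
theorem stmt1 (d N : ℕ) (hd : 1 ≤ d) (hde : Even (d + 1)) (hN : 0 < N)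
    (hdvd : (d + 1) ∣ N) :
    ∃ (h : Fin N → ℝ) (J : Fin N → Fin N → ℝ),
      (∀ i j, J i j = J j i) ∧ (∀ i, J i i = 0) ∧
      (∀ i, degreeJ J i ≤ d) ∧
      ((d + 1).choose ((d + 1) / 2)) ^ (N / (d + 1)) ≤
        Set.ncard {S : Fin N → ℝ | IsingLocalMin h J S} ∧
      ∀ S, IsingLocalMin h J S → IsingGlobalMin h J S :=
  stmt1_general d N hde hdvd
end

section
/- Let F ⊆ T be the set of free variables of H^eff. Then every local minimum S of H^eff satisfies S i = −sign(h^eff i) for every fixed variable i with h^eff i ≠ 0, and if some fixed variable i has h^eff i = 0 then H^eff has no local minimum at all. Consequently H^eff has at most 2^{|F|} local minima. -/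
open Finset

/-- `h^max i = ∑_{j ∈ T} |J i j|`. -/
noncomputable def hmax {n : ℕ} (J : Fin n → Fin n → ℝ) (i : Fin n) : ℝ := ∑ j, |J i j|

/-!
Flipping spin `k` changes the energy by `-2 S k (h k + ∑ j, J k j S j)`, so at a local minimum
every spin opposes its local field. For a fixed variable the coupling part of that field is at
most `h^max i ≤ |h i|` in absolute value, so `S i` must oppose `h i` itself: this forces
`S i = -sign (h i)` and is impossible when `h i = 0`. A local minimum is therefore determined by
its values on the free variables.
-/

theorem Fintype.sum_sum_ite_lt_add_self {ι M : Type*} [Fintype ι] [LinearOrder ι]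
    [AddCommMonoid M] (f : ι → ι → M) (hsym : ∀ i j, f i j = f j i) (hdiag : ∀ i, f i i = 0) :
    (∑ i, ∑ j, if i < j then f i j else 0) + (∑ i, ∑ j, if i < j then f i j else 0) =
      ∑ i, ∑ j, f i j := by
  conv_lhs => enter [2]; rw [Finset.sum_comm]
  rw [← Finset.sum_add_distrib]
  refine Finset.sum_congr rfl fun i _ => ?_
  rw [← Finset.sum_add_distrib]
  refine Finset.sum_congr rfl fun j _ => ?_
  rcases lt_trichotomy i j with h | rfl | h
  · simp [h, h.not_gt]
  · simp [hdiag]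
  · simp [h, h.not_gt, hsym i j]

section Ising

variable {N : ℕ} (h : Fin N → ℝ) (J : Fin N → Fin N → ℝ)

noncomputable def localField (S : Fin N → ℝ) (i : Fin N) : ℝ := h i + ∑ j, J i j * S j

variable {J}

theorem energy_eq_add_half (hsym : ∀ i j, J i j = J j i) (hdiag : ∀ i, J i i = 0)
    (S : Fin N → ℝ) :
    energy h J S = ∑ i, h i * S i + (∑ i, ∑ j, J i j * S i * S j) / 2 := by
  rw [energy, ← Fintype.sum_sum_ite_lt_add_self (fun i j => J i j * S i * S j)
    (fun i j => by rw [hsym]; ring) (fun i => by simp [hdiag])]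
  ring

theorem flipAt_eq_add_single (S : Fin N → ℝ) (k : Fin N) :
    flipAt S k = S + Pi.single k (-2 * S k) := by
  ext i
  rcases eq_or_ne i k with rfl | hik
  · simp [flipAt]; ring
  · simp [flipAt, hik]

theorem energy_flipAt (hsym : ∀ i j, J i j = J j i) (hdiag : ∀ i, J i i = 0)
    (S : Fin N → ℝ) (k : Fin N) :
    energy h J (flipAt S k) = energy h J S - 2 * S k * localField h J S k := by
  rw [energy_eq_add_half h hsym hdiag, energy_eq_add_half h hsym hdiag, flipAt_eq_add_single]
  simp only [Pi.add_apply, mul_add, add_mul, Finset.sum_add_distrib, Pi.single_apply, mul_ite,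
    ite_mul, mul_zero, zero_mul, Finset.sum_ite_irrel, Finset.sum_const_zero, Finset.sum_ite_eq',
    Finset.mem_univ, if_true, hdiag, localField]
  simp only [hsym _ k, Finset.mul_sum]
  ring_nf
  simp only [Finset.sum_neg_distrib]
  ring

variable {h}

theorem IsingLocalMin.mul_localField_neg (hsym : ∀ i j, J i j = J j i)
    (hdiag : ∀ i, J i i = 0) {S : Fin N → ℝ} (hS : IsingLocalMin h J S) (i : Fin N) :
    S i * localField h J S i < 0 := by
  have := hS.2 i
  rw [energy_flipAt h hsym hdiag] at this
  linarith

theorem IsAssignment.abs_eq_one {S : Fin N → ℝ} (hS : IsAssignment S) (i : Fin N) :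
    |S i| = 1 := by
  rcases hS i with hi | hi <;> simp [hi]

theorem IsAssignment.abs_sum_mul_le_hmax {S : Fin N → ℝ} (hS : IsAssignment S) (i : Fin N) :
    |∑ j, J i j * S j| ≤ hmax J i :=
  calc |∑ j, J i j * S j| ≤ ∑ j, |J i j * S j| := Finset.abs_sum_le_sum_abs _ _
    _ = hmax J i := by simp only [abs_mul, hS.abs_eq_one, mul_one, hmax]

theorem IsingLocalMin.mul_neg_of_hmax_le_abs (hsym : ∀ i j, J i j = J j i)
    (hdiag : ∀ i, J i i = 0) {S : Fin N → ℝ} (hS : IsingLocalMin h J S) {i : Fin N}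
    (hfix : hmax J i ≤ |h i|) : S i * h i < 0 := by
  have hneg := hS.mul_localField_neg hsym hdiag i
  have hcoupling : -|h i| ≤ S i * ∑ j, J i j * S j := by
    refine neg_le_of_abs_le ?_
    rw [abs_mul, hS.1.abs_eq_one, one_mul]
    exact (hS.1.abs_sum_mul_le_hmax i).trans hfix
  have hlt : S i * h i < |h i| := by
    rw [localField, mul_add] at hneg
    linarith
  by_contra! hnonneg
  have habs : |S i * h i| = |h i| := by rw [abs_mul, hS.1.abs_eq_one, one_mul]
  rw [abs_of_nonneg hnonneg] at habs
  linarith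

theorem IsAssignment.eq_neg_sign_of_mul_neg {S : Fin N → ℝ} (hS : IsAssignment S) {i : Fin N}
    {x : ℝ} (hx : S i * x < 0) : S i = -Real.sign x := by
  rcases hS i with hi | hi <;> rw [hi] at hx ⊢
  · rw [Real.sign_of_pos (by linarith)]
  · rw [Real.sign_of_neg (by linarith), neg_neg]

theorem IsAssignment.apply_eq_of_mul_neg {S T : Fin N → ℝ} (hS : IsAssignment S)
    (hT : IsAssignment T) {i : Fin N} {x : ℝ} (hSx : S i * x < 0) (hTx : T i * x < 0) :
    S i = T i := by
  rw [hS.eq_neg_sign_of_mul_neg hSx, hT.eq_neg_sign_of_mul_neg hTx]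

theorem IsAssignment.apply_eq_of_iff {S T : Fin N → ℝ} (hS : IsAssignment S)
    (hT : IsAssignment T) {i : Fin N} (hiff : S i = 1 ↔ T i = 1) : S i = T i := by
  rcases hS i with hSi | hSi <;> rcases hT i with hTi | hTi <;> simp_all

theorem ncard_isingLocalMin_le (hsym : ∀ i j, J i j = J j i) (hdiag : ∀ i, J i i = 0) :
    {S : Fin N → ℝ | IsingLocalMin h J S}.ncard ≤ 2 ^ {i : Fin N | |h i| < hmax J i}.ncard := by
  set F := {i : Fin N | |h i| < hmax J i}
  rw [← Set.ncard_powerset F]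
  refine Set.ncard_le_ncard_of_injOn (fun S => {i | i ∈ F ∧ S i = 1})
    (fun S _ => fun i hi => hi.1) (fun S hS T hT hST => funext fun i => ?_)
  by_cases hiF : i ∈ F
  · refine hS.1.apply_eq_of_iff hT.1 ?_
    simpa [hiF] using Set.ext_iff.mp hST i
  · have hfix : hmax J i ≤ |h i| := not_lt.mp hiF
    exact hS.1.apply_eq_of_mul_neg hT.1 (hS.mul_neg_of_hmax_le_abs hsym hdiag hfix)
      (hT.mul_neg_of_hmax_le_abs hsym hdiag hfix)

end Ising

/-- every local minimum of `H^eff` satisfies `S i = -sign(h^eff i)` for every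
fixed variable `i` (i.e. with `|h^eff i| ≥ h^max i`) having `h^eff i ≠ 0`; if some fixed
variable has `h^eff i = 0` there is no local minimum; and the number of local minima is at
most `2 ^ |F|` where `F` is the set of free variables (those with `|h^eff i| < h^max i`). -/
theorem stmt4 (n : ℕ) (heff : Fin n → ℝ) (J : Fin n → Fin n → ℝ)
    (hsym : ∀ i j, J i j = J j i) (hdiag : ∀ i, J i i = 0) :
    (∀ S, IsingLocalMin heff J S →
      ∀ i, hmax J i ≤ |heff i| → heff i ≠ 0 → S i = -Real.sign (heff i)) ∧
    ((∃ i, hmax J i ≤ |heff i| ∧ heff i = 0) →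
      {S : Fin n → ℝ | IsingLocalMin heff J S} = ∅) ∧
    Set.ncard {S : Fin n → ℝ | IsingLocalMin heff J S} ≤
      2 ^ Set.ncard {i : Fin n | |heff i| < hmax J i} := by
  refine ⟨fun S hS i hfix _ =>
      hS.1.eq_neg_sign_of_mul_neg (hS.mul_neg_of_hmax_le_abs hsym hdiag hfix),
    fun ⟨_, hfix, hzero⟩ => Set.eq_empty_of_forall_notMem fun _ hS => by
      simpa [hzero] using hS.mul_neg_of_hmax_le_abs hsym hdiag hfix,
    ncard_isingLocalMin_le hsym hdiag⟩
end

section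
/- There exists a constant c > 0 such that for every integer f ≥ 1 and every even integer l ≥ 2, there is a choice of integers M_C, one for each column C, such that the Hamiltonian H(S) = ∑_{columns C} (∑_{i ∈ C} S i − M_C)^2 on assignments S : {1,…,l}^f → {−1,+1} has at least 2^N · (c/(f·√l))^{n_C} global minima, and every global minimum is a (2^f − 1)-minimum; here N = l^f and n_C = f·l^{f−1}. -/
open Finset

/-- The sum of `S` along the column through `y` in direction `b`. -/
def colSum (f l : ℕ) (S : (Fin f → Fin l) → ℤ) (b : Fin f) (y : Fin f → Fin l) : ℤ :=
  ∑ x : Fin l, S (Function.update y b x)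

/-- A ±1 assignment on the grid. -/
def gridValid {f l : ℕ} (S : (Fin f → Fin l) → ℤ) : Prop := ∀ p, S p = 1 ∨ S p = -1

/-- The Hamiltonian `H(S) = ∑_{columns C} (∑_{i ∈ C} S i - M_C)^2`, where each column is
represented by the unique pair `(b, y)` with `y b = z` (`z` a fixed base point). -/
def gridH (f l : ℕ) (z : Fin l) (M : Fin f → (Fin f → Fin l) → ℤ)
    (S : (Fin f → Fin l) → ℤ) : ℤ :=
  ∑ b : Fin f, ∑ y : Fin f → Fin l,
    if y b = z then (colSum f l S b y - M b y) ^ 2 else 0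

/-!
Take for `M` the most frequent vector of column sums among all `2^N` assignments: every
assignment in that fibre has `H = 0`, so the global minima are exactly this fibre. To bound the
fibre from below, compare the distribution of the column-sum vector with the product weight
`Q v = ∏_C g (v C)`, `g s = (10√l)⁻¹ (1 + s²/2l)⁻¹`, whose total mass is at most `1`. Gibbs'
inequality says the largest fibre has relative size at least `exp (𝔼 log Q)`, and since a column
sum `s` of independent signs has `𝔼 s² = l`, this is at least `(e^{-1/2} / (10√l))^{n_C}`.

If `S` is a global minimum and `H S' = H S = 0`, then `S` and `S'` have the same column sums, so
every axis-parallel line through a point where they differ contains a second such point. A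
nonempty set of grid points with this property has at least `2^f` points (split it along one
coordinate and induct).
-/

open Real

section SignCube

variable {ι : Type*} [Fintype ι] [DecidableEq ι]

def signCube (ι : Type*) [Fintype ι] [DecidableEq ι] : Finset (ι → ℤ) :=
  Fintype.piFinset fun _ => {1, -1}

lemma mem_signCube {S : ι → ℤ} : S ∈ signCube ι ↔ ∀ p, S p = 1 ∨ S p = -1 := by
  simp [signCube]

lemma card_signCube : #(signCube ι) = 2 ^ Fintype.card ι := by
  simp [signCube]

lemma abs_sum_le_card_of_mem_signCube {κ : Type*} [Fintype κ] {S : ι → ℤ} (hS : S ∈ signCube ι)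
    (e : κ → ι) : |∑ k, S (e k)| ≤ Fintype.card κ := by
  calc |∑ k, S (e k)| ≤ ∑ k, |S (e k)| := abs_sum_le_sum_abs _ _
    _ = Fintype.card κ := by
      simp [Finset.sum_congr rfl fun k _ => show |S (e k)| = 1 by
        rcases mem_signCube.mp hS (e k) with h | h <;> simp [h]]

lemma sum_signCube_mul_eq_zero {p q : ι} (hpq : p ≠ q) : ∑ S ∈ signCube ι, S p * S q = 0 := by
  refine sum_involution (fun S _ => Function.update S p (-S p)) ?_ ?_ ?_ ?_
  · intro S _
    simp [Function.update_of_ne hpq.symm]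
  · intro S hS _ h
    have := congrFun h p
    rcases mem_signCube.mp hS p with h' | h' <;> simp [h'] at this
  · intro S hS
    rw [mem_signCube] at hS ⊢
    intro r
    rcases eq_or_ne r p with rfl | hr
    · rcases hS r with h | h <;> simp [h]
    · simpa [Function.update_of_ne hr] using hS r
  · intro S _
    simp

lemma sum_signCube_sq_sum {κ : Type*} [Fintype κ] {e : κ → ι} (he : e.Injective) :
    ∑ S ∈ signCube ι, (∑ k, S (e k)) ^ 2 = Fintype.card κ * #(signCube ι) := by
  classical
  have hsq : ∀ S ∈ signCube ι, ∀ p, S p * S p = 1 := fun S hS p => by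
    rcases mem_signCube.mp hS p with h | h <;> simp [h]
  have hpair : ∀ k k', ∑ S ∈ signCube ι, S (e k) * S (e k') =
      if k = k' then (#(signCube ι) : ℤ) else 0 := by
    intro k k'
    split_ifs with h
    · subst h
      simp [sum_congr rfl fun S hS => hsq S hS (e k)]
    · exact sum_signCube_mul_eq_zero (he.ne h)
  simp_rw [sq, sum_mul_sum]
  rw [sum_comm]
  simp_rw [sum_comm (s := signCube ι), hpair]
  simp

end SignCube

lemma mul_log_le_mul_log_div_add {c m n q : ℝ} (hc : 0 < c) (hcm : c ≤ m) (hn : 0 < n)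
    (hq : 0 < q) : c * log q ≤ c * log (m / n) + (n * q - c) := by
  have hgibbs : log (n * q / c) ≤ n * q / c - 1 := log_le_sub_one_of_pos (by positivity)
  have hmono : log (c / n) ≤ log (m / n) := log_le_log (by positivity) (by gcongr)
  have hsplit : log q = log (n * q / c) + log (c / n) := by
    rw [← log_mul (by positivity) (by positivity)]
    congr 1
    field_simp
  rw [hsplit]
  have : c * (n * q / c - 1) = n * q - c := by field_simp
  nlinarith

-- Gibbs' inequality for the distribution `p` of `Φ` on `Ω`: `∑ p log Q ≤ ∑ p log p ≤ log (max p)`.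
lemma exists_mul_exp_le_card_fiber {α β : Type*} [DecidableEq β] {Ω : Finset α}
    (hΩ : Ω.Nonempty) (Φ : α → β) {Q : β → ℝ} (hQ : ∀ v, 0 < Q v)
    (hQsum : ∑ v ∈ Ω.image Φ, Q v ≤ 1) :
    ∃ v, #Ω * exp ((∑ ω ∈ Ω, log (Q (Φ ω))) / #Ω) ≤ #{ω ∈ Ω | Φ ω = v} := by
  set n : ℝ := (#Ω : ℝ)
  set c : β → ℕ := fun v => #{ω ∈ Ω | Φ ω = v}
  have hn : 0 < n := by simp [n, hΩ.card_pos]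
  have hc : ∀ v ∈ Ω.image Φ, 0 < (c v : ℝ) := by
    intro v hv
    obtain ⟨ω, hω, rfl⟩ := mem_image.mp hv
    have : 0 < c (Φ ω) := card_pos.mpr ⟨ω, mem_filter.mpr ⟨hω, rfl⟩⟩
    exact_mod_cast this
  have hcsum : ∑ v ∈ Ω.image Φ, (c v : ℝ) = n := by
    simp only [n, c, card_eq_sum_card_image Φ Ω, Nat.cast_sum]
  obtain ⟨w, hwB, hw⟩ := (Ω.image Φ).exists_max_image c (hΩ.image Φ)
  refine ⟨w, ?_⟩
  have hlog : ∑ ω ∈ Ω, log (Q (Φ ω)) ≤ n * log (c w / n) := calc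
    ∑ ω ∈ Ω, log (Q (Φ ω)) = ∑ v ∈ Ω.image Φ, c v * log (Q v) := by
      simp [sum_comp (fun v => log (Q v)) Φ, c]
    _ ≤ ∑ v ∈ Ω.image Φ, (c v * log (c w / n) + (n * Q v - c v)) := by
      refine sum_le_sum fun v hv => mul_log_le_mul_log_div_add (hc v hv) ?_ hn (hQ v)
      exact_mod_cast hw v hv
    _ = n * log (c w / n) + n * (∑ v ∈ Ω.image Φ, Q v - 1) := by
      rw [sum_add_distrib, ← sum_mul, sum_sub_distrib, ← mul_sum, hcsum]
      ring
    _ ≤ n * log (c w / n) := by nlinarith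
  have hpos : 0 < (c w : ℝ) / n := div_pos (hc w hwB) hn
  calc n * exp ((∑ ω ∈ Ω, log (Q (Φ ω))) / n) ≤ n * exp (log (c w / n)) := by
        gcongr
        rwa [div_le_iff₀' hn]
    _ = c w := by rw [exp_log hpos]; field_simp

lemma inv_one_add_sq_div_le_sub {l : ℕ} (hl : 1 ≤ l) (k : ℕ) :
    (1 + ((k : ℝ) + 1) ^ 2 / (2 * l))⁻¹ ≤ 4 * l / (k + √l) - 4 * l / (k + 1 + √l) := by
  have ha : 0 < √(l : ℝ) := by positivity
  have hsq : √(l : ℝ) ^ 2 = l := sq_sqrt (by positivity)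
  have hkey : ((k : ℝ) + √l) * (k + 1 + √l) ≤ 2 * (2 * l + (k + 1) ^ 2) := by
    nlinarith [sq_nonneg ((k : ℝ) + 1 - √l)]
  have e1 : (1 + ((k : ℝ) + 1) ^ 2 / (2 * l))⁻¹ = 2 * l / (2 * l + ((k : ℝ) + 1) ^ 2) := by
    field_simp
  have e2 : 4 * l / (k + √l) - 4 * l / (k + 1 + √l) = 4 * l / ((k + √l) * (k + 1 + √l)) := by
    field_simp
    ring
  rw [e1, e2, div_le_div_iff₀ (by positivity) (by positivity)]
  nlinarith [mul_le_mul_of_nonneg_left hkey (by positivity : (0 : ℝ) ≤ 2 * l)]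

lemma sum_range_inv_one_add_sq_div_le {l : ℕ} (hl : 1 ≤ l) :
    ∑ k ∈ range (l + 1), (1 + (k : ℝ) ^ 2 / (2 * l))⁻¹ ≤ 1 + 4 * √l := by
  have ha : 0 < √(l : ℝ) := by positivity
  set F : ℕ → ℝ := fun k => 4 * l / (k + √l)
  rw [sum_range_succ']
  calc ∑ k ∈ range l, (1 + ((k + 1 : ℕ) : ℝ) ^ 2 / (2 * l))⁻¹
        + (1 + ((0 : ℕ) : ℝ) ^ 2 / (2 * l))⁻¹
      ≤ ∑ k ∈ range l, (F k - F (k + 1)) + 1 := by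
        gcongr with k
        · exact_mod_cast (inv_one_add_sq_div_le_sub hl k).trans_eq (by simp [F, add_assoc])
        · simp
    _ = F 0 - F l + 1 := by rw [sum_range_sub']
    _ ≤ 1 + 4 * √l := by
        have : 0 ≤ F l := by positivity
        have : F 0 = 4 * √l := by
          simp only [F, CharP.cast_eq_zero, zero_add, mul_div_assoc, div_sqrt]
        linarith

lemma sum_Icc_inv_one_add_sq_div_le {l : ℕ} (hl : 1 ≤ l) :
    ∑ d ∈ Icc (-(l : ℤ)) l, (1 + (d : ℝ) ^ 2 / (2 * l))⁻¹ ≤ 10 * √l := by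
  set w : ℤ → ℝ := fun d => (1 + (d : ℝ) ^ 2 / (2 * l))⁻¹
  have hw : ∀ d, 0 ≤ w d := fun d => by positivity
  set A := (range (l + 1)).image (fun k : ℕ => (k : ℤ))
  set B := (range (l + 1)).image (fun k : ℕ => -(k : ℤ))
  have hsub : Icc (-(l : ℤ)) l ⊆ A ∪ B := by
    intro d hd
    simp only [mem_Icc] at hd
    simp only [A, B, mem_union, mem_image, mem_range]
    rcases le_total 0 d with h | h
    · exact Or.inl ⟨d.toNat, by omega, by omega⟩
    · exact Or.inr ⟨(-d).toNat, by omega, by omega⟩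
  have h1 : (1 : ℝ) ≤ √l := by simpa using sqrt_le_sqrt (show (1 : ℝ) ≤ l by exact_mod_cast hl)
  calc ∑ d ∈ Icc (-(l : ℤ)) l, w d ≤ ∑ d ∈ A ∪ B, w d :=
        sum_le_sum_of_subset_of_nonneg hsub fun d _ _ => hw d
    _ ≤ ∑ d ∈ A, w d + ∑ d ∈ B, w d := by
        rw [← sum_union_inter]
        exact le_add_of_nonneg_right (sum_nonneg fun d _ => hw d)
    _ ≤ ∑ k ∈ range (l + 1), w k + ∑ k ∈ range (l + 1), w (-k) := by
        gcongr <;> exact sum_image_le_of_nonneg fun d _ => hw d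
    _ = 2 * ∑ k ∈ range (l + 1), (1 + (k : ℝ) ^ 2 / (2 * l))⁻¹ := by simp [w, two_mul]
    _ ≤ 10 * √l := by linarith [sum_range_inv_one_add_sq_div_le hl]

section ColumnWeight

variable {l : ℕ}

noncomputable def colWeight (l : ℕ) (s : ℤ) : ℝ := (10 * √l)⁻¹ * (1 + (s : ℝ) ^ 2 / (2 * l))⁻¹

lemma colWeight_pos (hl : 1 ≤ l) (s : ℤ) : 0 < colWeight l s := by
  have : (0 : ℝ) < l := by exact_mod_cast hl
  unfold colWeight
  positivity

lemma sum_Icc_colWeight_le_one (hl : 1 ≤ l) : ∑ s ∈ Icc (-(l : ℤ)) l, colWeight l s ≤ 1 := by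
  have : (0 : ℝ) < l := by exact_mod_cast hl
  unfold colWeight
  rw [← mul_sum, inv_mul_le_one₀ (by positivity)]
  exact sum_Icc_inv_one_add_sq_div_le hl

lemma log_colWeight_ge (hl : 1 ≤ l) (s : ℤ) :
    -log (10 * √l) - (s : ℝ) ^ 2 / (2 * l) ≤ log (colWeight l s) := by
  have : (0 : ℝ) < l := by exact_mod_cast hl
  have hlog := log_le_sub_one_of_pos (show 0 < 1 + (s : ℝ) ^ 2 / (2 * l) by positivity)
  rw [colWeight, log_mul (x := (10 * √l)⁻¹) (by positivity) (by positivity), log_inv, log_inv]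
  linarith

end ColumnWeight

section Grid

variable {f l : ℕ}

lemma gridValid_iff_mem_signCube {S : (Fin f → Fin l) → ℤ} : gridValid S ↔ S ∈ signCube _ :=
  mem_signCube.symm

lemma abs_colSum_le {S : (Fin f → Fin l) → ℤ} (hS : S ∈ signCube _) (b : Fin f)
    (y : Fin f → Fin l) : |colSum f l S b y| ≤ l := by
  simpa [colSum] using abs_sum_le_card_of_mem_signCube hS (Function.update y b)

lemma sum_signCube_colSum_sq (b : Fin f) (y : Fin f → Fin l) :
    ∑ S ∈ signCube _, colSum f l S b y ^ 2 = l * #(signCube (Fin f → Fin l)) := by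
  simpa [colSum] using sum_signCube_sq_sum (Function.update_injective y b)

lemma colSum_update_self (S : (Fin f → Fin l) → ℤ) (b : Fin f) (y : Fin f → Fin l) (t : Fin l) :
    colSum f l S b (Function.update y b t) = colSum f l S b y := by
  simp [colSum]

lemma gridH_nonneg (z : Fin l) (M : Fin f → (Fin f → Fin l) → ℤ) (S : (Fin f → Fin l) → ℤ) :
    0 ≤ gridH f l z M S :=
  sum_nonneg fun b _ => sum_nonneg fun y _ => by split_ifs <;> positivity

lemma gridH_eq_zero_iff {z : Fin l} {M : Fin f → (Fin f → Fin l) → ℤ}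
    {S : (Fin f → Fin l) → ℤ} :
    gridH f l z M S = 0 ↔ ∀ b y, y b = z → colSum f l S b y = M b y := by
  have hterm : ∀ b y, 0 ≤ if y b = z then (colSum f l S b y - M b y) ^ 2 else 0 :=
    fun b y => by split_ifs <;> positivity
  simp only [gridH, sum_eq_zero_iff_of_nonneg fun b _ => sum_nonneg fun y _ => hterm b y,
    sum_eq_zero_iff_of_nonneg fun y _ => hterm _ y, mem_univ, true_implies, ite_eq_right_iff,
    pow_eq_zero_iff two_ne_zero, sub_eq_zero]

abbrev Column (f l : ℕ) (z : Fin l) := {c : Fin f × (Fin f → Fin l) // c.2 c.1 = z}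

lemma card_column (z : Fin l) : Fintype.card (Column f l z) = f * l ^ (f - 1) := by
  rw [Fintype.card_congr
    (Equiv.subtypeProdEquivSigmaSubtype fun b (y : Fin f → Fin l) => y b = z)]
  simp only [Fintype.card_sigma, Fintype.card_subtype]
  have := fun b => Fintype.card_filter_piFinset_const (ι := Fin f) (univ : Finset (Fin l)) b z
  simp_all

def columnSums (z : Fin l) (S : (Fin f → Fin l) → ℤ) (c : Column f l z) : ℤ :=
  colSum f l S c.1.1 c.1.2

-- Entries with `y b ≠ z` are never read by `gridH`.
def colTarget {z : Fin l} (v : Column f l z → ℤ) (b : Fin f) (y : Fin f → Fin l) : ℤ :=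
  if h : y b = z then v ⟨(b, y), h⟩ else 0

lemma gridH_colTarget_eq_zero_iff {z : Fin l} {v : Column f l z → ℤ}
    {S : (Fin f → Fin l) → ℤ} : gridH f l z (colTarget v) S = 0 ↔ columnSums z S = v := by
  rw [gridH_eq_zero_iff, funext_iff, Subtype.forall, Prod.forall]
  refine forall₂_congr fun b y => forall_congr' fun h => ?_
  simp [colTarget, columnSums, h]

end Grid

section Counting

variable {f l : ℕ}

lemma sum_image_columnSums_prod_colWeight_le_one (hl : 1 ≤ l) (z : Fin l) :
    ∑ v ∈ (signCube _).image (columnSums (f := f) z), ∏ c, colWeight l (v c) ≤ 1 := calc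
  _ ≤ ∑ v ∈ Fintype.piFinset fun _ : Column f l z => Icc (-(l : ℤ)) l, ∏ c, colWeight l (v c) := by
    refine sum_le_sum_of_subset_of_nonneg ?_ fun v _ _ =>
      prod_nonneg fun c _ => (colWeight_pos hl _).le
    intro v hv
    obtain ⟨S, hS, rfl⟩ := mem_image.mp hv
    exact Fintype.mem_piFinset.mpr fun c => mem_Icc.mpr (abs_le.mp (abs_colSum_le hS _ _))
  _ = ∏ _c : Column f l z, ∑ s ∈ Icc (-(l : ℤ)) l, colWeight l s := (prod_univ_sum _ _).symm
  _ ≤ 1 := prod_le_one (fun _ _ => sum_nonneg fun s _ => (colWeight_pos hl s).le)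
    fun _ _ => sum_Icc_colWeight_le_one hl

lemma sum_log_colWeight_columnSums_ge (hl : 1 ≤ l) {z : Fin l} (c : Column f l z) :
    -(#(signCube (Fin f → Fin l)) * (log (10 * √l) + 1 / 2)) ≤
      ∑ S ∈ signCube _, log (colWeight l (columnSums z S c)) := by
  have : (0 : ℝ) < l := by exact_mod_cast hl
  have hsq : ∑ S ∈ signCube _, (columnSums z S c : ℝ) ^ 2 = l * #(signCube (Fin f → Fin l)) := by
    exact_mod_cast sum_signCube_colSum_sq c.1.1 c.1.2
  calc -(#(signCube _) * (log (10 * √l) + 1 / 2))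
      = ∑ S ∈ signCube _, (-log (10 * √l) - (columnSums z S c : ℝ) ^ 2 / (2 * l)) := by
        rw [sum_sub_distrib, ← sum_div, hsq, sum_const, nsmul_eq_mul]
        field_simp
        ring
    _ ≤ _ := sum_le_sum fun S _ => log_colWeight_ge hl _

lemma exists_card_fiber_columnSums_ge (hl : 1 ≤ l) (z : Fin l) :
    ∃ v : Column f l z → ℤ, (2 : ℝ) ^ (l ^ f) * (1 / (20 * √l)) ^ (f * l ^ (f - 1)) ≤
      #{S ∈ signCube _ | columnSums z S = v} := by
  set Ω := signCube (Fin f → Fin l)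
  set n := Fintype.card (Column f l z) with hn
  set β := log (10 * √l) + 1 / 2
  have hΩ : Ω.Nonempty := ⟨fun _ => 1, mem_signCube.mpr fun _ => Or.inl rfl⟩
  have hΩcard : (#Ω : ℝ) = 2 ^ (l ^ f) := by simp [Ω, card_signCube]
  have hmean : #Ω * (n * -β) ≤ ∑ S ∈ Ω, log (∏ c, colWeight l (columnSums z S c)) := calc
    #Ω * (n * -β) = ∑ _c : Column f l z, -(#Ω * β) := by simp [n]; ring
    _ ≤ ∑ c, ∑ S ∈ Ω, log (colWeight l (columnSums z S c)) :=
      sum_le_sum fun c _ => sum_log_colWeight_columnSums_ge hl c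
    _ = ∑ S ∈ Ω, log (∏ c, colWeight l (columnSums z S c)) := by
      rw [sum_comm]
      exact sum_congr rfl fun S _ => (log_prod fun c _ => (colWeight_pos hl _).ne').symm
  obtain ⟨v, hv⟩ := exists_mul_exp_le_card_fiber hΩ (columnSums z)
    (fun v => prod_pos fun c _ => colWeight_pos hl (v c))
    (sum_image_columnSums_prod_colWeight_le_one hl z)
  refine ⟨v, le_trans ?_ hv⟩
  have hbase : 1 / (20 * √l) ≤ exp (-β) := calc
    1 / (20 * √l) = (10 * √l)⁻¹ * (-(1 / 2) + 1) := by field_simp; ring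
    _ ≤ (10 * √l)⁻¹ * exp (-(1 / 2)) := by gcongr; exact add_one_le_exp _
    _ = exp (-β) := by
      have : (0 : ℝ) < 10 * √l := by positivity
      rw [neg_add, exp_add, exp_neg (log _), exp_log this]
  calc (2 : ℝ) ^ (l ^ f) * (1 / (20 * √l)) ^ (f * l ^ (f - 1))
      ≤ #Ω * exp (-β) ^ n := by rw [hΩcard, hn, card_column]; gcongr
    _ = #Ω * exp (n * -β) := by rw [exp_nat_mul]
    _ ≤ #Ω * exp ((∑ S ∈ Ω, log (∏ c, colWeight l (columnSums z S c))) / #Ω) := by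
      gcongr
      rwa [le_div_iff₀' (by exact_mod_cast hΩ.card_pos)]

end Counting

lemma two_pow_card_le_card_of_exists_update {ι α : Type*} [DecidableEq ι] (B : Finset ι)
    {D : Finset (ι → α)} (hD : D.Nonempty)
    (hline : ∀ b ∈ B, ∀ p ∈ D, ∃ x ≠ p b, Function.update p b x ∈ D) : 2 ^ #B ≤ #D := by
  classical
  induction B using Finset.induction_on generalizing D with
  | empty => simpa using hD.card_pos
  | @insert b B hb ih =>
    obtain ⟨p₀, hp₀⟩ := hD
    obtain ⟨x₀, hx₀, hx₀D⟩ := hline b (mem_insert_self b B) p₀ hp₀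
    have hslice : ∀ t, ∀ a ∈ B, ∀ p ∈ D.filter (· b = t), ∃ x ≠ p a,
        Function.update p a x ∈ D.filter (· b = t) := by
      intro t a ha p hp
      rw [mem_filter] at hp
      obtain ⟨x, hx, hxD⟩ := hline a (mem_insert_of_mem ha) p hp.1
      have hab : b ≠ a := fun h => hb (h ▸ ha)
      exact ⟨x, hx, mem_filter.mpr ⟨hxD, by rw [Function.update_of_ne hab, hp.2]⟩⟩
    have h₁ := ih (D := D.filter (· b = p₀ b)) ⟨p₀, mem_filter.mpr ⟨hp₀, rfl⟩⟩ (hslice (p₀ b))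
    have h₂ := ih (D := D.filter (· b = x₀))
      ⟨_, mem_filter.mpr ⟨hx₀D, Function.update_self b x₀ p₀⟩⟩ (hslice x₀)
    have hsub : D.filter (· b = x₀) ⊆ D.filter (¬· b = p₀ b) := fun p hp => by
      rw [mem_filter] at hp ⊢
      exact ⟨hp.1, fun h => hx₀ (hp.2 ▸ h)⟩
    calc 2 ^ #(insert b B) = 2 ^ #B + 2 ^ #B := by
          rw [card_insert_of_notMem hb, pow_succ, mul_two]
      _ ≤ #(D.filter (· b = p₀ b)) + #(D.filter (¬· b = p₀ b)) :=
        add_le_add h₁ (h₂.trans (card_le_card hsub))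
      _ = #D := card_filter_add_card_filter_not _

section Minima

variable {f l : ℕ}

lemma two_pow_le_card_ne_of_colSum_eq {S S' : (Fin f → Fin l) → ℤ}
    (hcol : ∀ b y, colSum f l S b y = colSum f l S' b y) (hne : S ≠ S') :
    2 ^ f ≤ #{p | S p ≠ S' p} := by
  obtain ⟨p₀, hp₀⟩ := Function.ne_iff.mp hne
  have hline : ∀ b ∈ (univ : Finset (Fin f)), ∀ p ∈ ({p | S p ≠ S' p} : Finset _),
      ∃ x ≠ p b, Function.update p b x ∈ ({p | S p ≠ S' p} : Finset _) := by
    intro b _ p hp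
    set h : Fin l → ℤ := fun x => S (Function.update p b x) - S' (Function.update p b x)
    have hsum : ∑ x, h x = 0 := by
      rw [sum_sub_distrib, sub_eq_zero]
      exact hcol b p
    have hpb : h (p b) ≠ 0 := by simpa [h, sub_eq_zero] using (mem_filter.mp hp).2
    have hrest : ∑ x ∈ univ.erase (p b), h x ≠ 0 := by
      rw [← add_sum_erase _ _ (mem_univ (p b))] at hsum
      contrapose! hpb
      simpa [hpb] using hsum
    obtain ⟨x, hx, hhx⟩ := exists_ne_zero_of_sum_ne_zero hrest
    exact ⟨x, ne_of_mem_erase hx, mem_filter.mpr ⟨mem_univ _, sub_ne_zero.mp hhx⟩⟩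
  simpa using two_pow_card_le_card_of_exists_update univ ⟨p₀, by simpa using hp₀⟩ hline

lemma colSum_eq_of_gridH_eq_zero {z : Fin l} {M : Fin f → (Fin f → Fin l) → ℤ}
    {S S' : (Fin f → Fin l) → ℤ} (hS : gridH f l z M S = 0) (hS' : gridH f l z M S' = 0)
    (b : Fin f) (y : Fin f → Fin l) : colSum f l S b y = colSum f l S' b y := by
  rw [gridH_eq_zero_iff] at hS hS'
  rw [← colSum_update_self S b y z, ← colSum_update_self S' b y z,
    hS _ _ (Function.update_self b z y), hS' _ _ (Function.update_self b z y)]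

lemma minimizer_iff_gridH_eq_zero {z : Fin l} {M : Fin f → (Fin f → Fin l) → ℤ}
    {T : (Fin f → Fin l) → ℤ} (hT : gridValid T) (hT₀ : gridH f l z M T = 0)
    (S : (Fin f → Fin l) → ℤ) :
    (gridValid S ∧ ∀ S', gridValid S' → gridH f l z M S ≤ gridH f l z M S') ↔
      gridValid S ∧ gridH f l z M S = 0 :=
  ⟨fun h => ⟨h.1, le_antisymm (hT₀ ▸ h.2 T hT) (gridH_nonneg z M S)⟩,
    fun h => ⟨h.1, fun S' _ => h.2 ▸ gridH_nonneg z M S'⟩⟩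

end Minima

/-- there is a constant `c > 0` such that for all `f ≥ 1` and even `l ≥ 2`
there are integers `M_C` such that `H(S) = ∑_C (∑_{i∈C} S i - M_C)^2` has at least
`2^N (c/(f√l))^{n_C}` global minima, and every global minimum is a `(2^f - 1)`-minimum. -/
theorem stmt7 :
    ∃ c : ℝ, 0 < c ∧
      ∀ (f l : ℕ), 1 ≤ f → ∀ (hl : 2 ≤ l), Even l →
        ∃ M : Fin f → (Fin f → Fin l) → ℤ,
          ((2 : ℝ) ^ (l ^ f) * (c / (f * Real.sqrt l)) ^ (f * l ^ (f - 1)) ≤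
            (Set.ncard {S : (Fin f → Fin l) → ℤ | gridValid S ∧ ∀ S', gridValid S' →
              gridH f l ⟨0, by omega⟩ M S ≤ gridH f l ⟨0, by omega⟩ M S'} : ℝ)) ∧
          ∀ S : (Fin f → Fin l) → ℤ,
            (gridValid S ∧ ∀ S', gridValid S' →
              gridH f l ⟨0, by omega⟩ M S ≤ gridH f l ⟨0, by omega⟩ M S') →
            ∀ S', gridValid S' → S' ≠ S →
              (univ.filter (fun p => S p ≠ S' p)).card ≤ 2 ^ f - 1 →
              gridH f l ⟨0, by omega⟩ M S < gridH f l ⟨0, by omega⟩ M S' := by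
  refine ⟨1 / 20, by norm_num, fun f l hf hl _ => ?_⟩
  set z : Fin l := ⟨0, by omega⟩
  obtain ⟨v, hv⟩ := exists_card_fiber_columnSums_ge (f := f) (by omega : 1 ≤ l) z
  obtain ⟨T, hT⟩ : ({S ∈ signCube _ | columnSums z S = v} : Finset _).Nonempty :=
    card_pos.mp (by exact_mod_cast (by positivity : (0 : ℝ) < _).trans_le hv)
  rw [mem_filter, ← gridH_colTarget_eq_zero_iff, ← gridValid_iff_mem_signCube] at hT
  have hmin := minimizer_iff_gridH_eq_zero hT.1 hT.2
  refine ⟨colTarget v, ?_, fun S hS S' hS' hne hcard => ?_⟩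
  · have hset : {S | gridValid S ∧ ∀ S', gridValid S' →
        gridH f l z (colTarget v) S ≤ gridH f l z (colTarget v) S'} =
        ↑({S ∈ signCube _ | columnSums z S = v} : Finset _) := by
      ext S
      rw [Set.mem_ofPred_eq, hmin, gridH_colTarget_eq_zero_iff, gridValid_iff_mem_signCube,
        coe_filter, Set.mem_ofPred_eq]
    rw [hset, Set.ncard_coe_finset]
    refine le_trans ?_ hv
    gcongr _ * ?_ ^ _
    rw [div_div]
    gcongr 1 / ?_
    have : (1 : ℝ) ≤ f := by exact_mod_cast hf
    nlinarith [sqrt_nonneg (l : ℝ)]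
  · have hS₀ := ((hmin S).mp hS).2
    rw [hS₀]
    refine (gridH_nonneg z _ S').lt_of_ne fun hS'₀ => ?_
    have := two_pow_le_card_ne_of_colSum_eq (colSum_eq_of_gridH_eq_zero hS₀ hS'₀.symm) hne.symm
    have := Nat.one_le_two_pow (n := f)
    omega
end
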